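/- Let G be the group with presentation ⟨x, y | x y x = y x y⟩ (the fundamental group of the complement of the trefoil knot). Then for every irreducible representation ρ : G → SL₂(ℂ), one has tr ρ(x² y x² y) = −2. -/

import Mathlib

abbrev SL2C := Matrix.SpecialLinearGroup (Fin 2) ℂ

/-- A representation `ρ : G → SL₂(ℂ)` is irreducible if the matrices `ρ g` have no
common eigenvector, i.e. there is no one-dimensional invariant subspace of `ℂ²`. -/
def IsIrreducibleRep {G : Type} [Group G] (ρ : G →* SL2C) : Prop :=
  ¬ ∃ v : Fin 2 → ℂ, v ≠ 0 ∧ ∀ g : G, ∃ c : ℂ,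
    Matrix.mulVec (ρ g : Matrix (Fin 2) (Fin 2) ℂ) v = c • v

/-- The single relation `x y x = y x y` of the trefoil knot group
`⟨x, y ∣ x y x = y x y⟩`; generators `x, y` are `0, 1`. -/
def trefoilRels : Set (FreeGroup (Fin 2)) :=
  {FreeGroup.of 0 * FreeGroup.of 1 * FreeGroup.of 0 *
    (FreeGroup.of 1 * FreeGroup.of 0 * FreeGroup.of 1)⁻¹}

/-! Put `a = ρ x`, `b = ρ y` and `z = a b a`, so that `ρ (x² y x² y) = z²`. The braid relation
gives `z a = b z` and `z b = a z`, hence `z²` commutes with `a`. By Cayley–Hamilton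
`z² = (tr z) z - 1`. If `tr z ≠ 0`, then `z` itself commutes with `a`, so `a z = z a = b z` and
`a = b`; an eigenvector of `ρ x = ρ y` then makes `ρ` reducible. Hence `tr z = 0`, `z² = -1`
and `tr z² = -2`. -/

section Braid

variable {M : Type*} [Monoid M] {a b : M}

theorem semiconjBy_braid_left (h : a * b * a = b * a * b) : SemiconjBy (a * b * a) a b := by
  unfold SemiconjBy
  nth_rw 1 [h]
  simp only [mul_assoc]

theorem semiconjBy_braid_right (h : a * b * a = b * a * b) : SemiconjBy (a * b * a) b a := by
  unfold SemiconjBy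
  nth_rw 2 [h]
  simp only [mul_assoc]

theorem commute_braid_sq (h : a * b * a = b * a * b) : Commute ((a * b * a) ^ 2) a := by
  rw [sq]
  exact (semiconjBy_braid_right h).mul_left (semiconjBy_braid_left h)

theorem sq_mul_sq_mul_eq_braid_sq (h : a * b * a = b * a * b) :
    a ^ 2 * b * a ^ 2 * b = (a * b * a) ^ 2 :=
  calc a ^ 2 * b * a ^ 2 * b = a * (a * b * a) * (a * b) := by simp only [sq, mul_assoc]
    _ = a * (b * a * b) * (a * b) := by rw [h]
    _ = (a * b * a) * (b * a * b) := by simp only [mul_assoc]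
    _ = (a * b * a) ^ 2 := by rw [← h, sq]

end Braid

namespace Matrix

variable {K : Type*} [Field K]

theorem sq_eq_trace_smul_sub_det_smul {R : Type*} [CommRing R] (M : Matrix (Fin 2) (Fin 2) R) :
    M ^ 2 = M.trace • M - M.det • 1 := by
  ext i j
  fin_cases i <;> fin_cases j <;>
    simp [sq, mul_apply, trace_fin_two, det_fin_two] <;> ring

theorem commute_of_commute_sq_of_trace_ne_zero {M N : Matrix (Fin 2) (Fin 2) K}
    (h : Commute (M ^ 2) N) (htr : M.trace ≠ 0) : Commute M N := by
  have hM : M = M.trace⁻¹ • (M ^ 2 + M.det • 1) := by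
    rw [sq_eq_trace_smul_sub_det_smul, sub_add_cancel, smul_smul, inv_mul_cancel₀ htr, one_smul]
  rw [hM]
  exact (h.add_left ((Commute.one_left N).smul_left _)).smul_left _

theorem exists_mulVec_eq_smul {n : Type*} [IsAlgClosed K] [Fintype n] [DecidableEq n]
    [Nonempty n] (M : Matrix n n K) :
    ∃ v : n → K, v ≠ 0 ∧ ∃ c : K, M *ᵥ v = c • v := by
  obtain ⟨c, hc⟩ := Module.End.exists_eigenvalue (toLin' M)
  obtain ⟨v, hv⟩ := hc.exists_hasEigenvector
  exact ⟨v, hv.2, c, by rw [← toLin'_apply, hv.apply_eq_smul]⟩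

namespace SpecialLinearGroup

def lineStabilizer {n : Type*} [Fintype n] [DecidableEq n] (v : n → K) :
    Subgroup (SpecialLinearGroup n K) where
  carrier := {M | ∃ c : K, (M : Matrix n n K) *ᵥ v = c • v}
  one_mem' := ⟨1, by simp⟩
  mul_mem' := by
    rintro M N ⟨c, hc⟩ ⟨d, hd⟩
    exact ⟨c * d, by rw [coe_mul, ← mulVec_mulVec, hd, mulVec_smul, hc, smul_smul, mul_comm]⟩
  inv_mem' := by
    rintro M ⟨c, hc⟩
    refine ⟨c⁻¹, ?_⟩
    have hv : v = c • ((M⁻¹ : SpecialLinearGroup n K) : Matrix n n K) *ᵥ v := by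
      rw [← mulVec_smul, ← hc, mulVec_mulVec, ← coe_mul, inv_mul_cancel, coe_one, one_mulVec]
    by_cases hc0 : c = 0
    · rw [hc0, zero_smul] at hv
      simp [hv]
    · nth_rw 2 [hv]
      rw [smul_smul, inv_mul_cancel₀ hc0, one_smul]

theorem trace_sq_of_trace_eq_zero {z : SpecialLinearGroup (Fin 2) K}
    (h : trace (z : Matrix (Fin 2) (Fin 2) K) = 0) :
    trace ((z ^ 2 : SpecialLinearGroup (Fin 2) K) : Matrix (Fin 2) (Fin 2) K) = -2 := by
  rw [coe_pow, sq_eq_trace_smul_sub_det_smul, h, det_coe, zero_smul, zero_sub, one_smul,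
    trace_neg, trace_one]
  norm_num

theorem commute_of_commute_sq_of_trace_ne_zero {z a : SpecialLinearGroup (Fin 2) K}
    (h : Commute (z ^ 2) a) (htr : trace (z : Matrix (Fin 2) (Fin 2) K) ≠ 0) : Commute z a := by
  have hsq : Commute ((z : Matrix (Fin 2) (Fin 2) K) ^ 2) a := by
    simpa only [coeMonoidHom_apply, map_pow] using h.map coeMonoidHom
  exact Subtype.ext <| by
    simpa only [coe_mul] using (Matrix.commute_of_commute_sq_of_trace_ne_zero hsq htr).eq

end SpecialLinearGroup

end Matrix

open Matrix

theorem not_isIrreducibleRep_of_forall_map_of_eq {α : Type} {rels : Set (FreeGroup α)}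
    (ρ : PresentedGroup rels →* SL2C) (A : SL2C) (h : ∀ i, ρ (PresentedGroup.of i) = A) :
    ¬ IsIrreducibleRep ρ := by
  obtain ⟨v, hv, c, hc⟩ := exists_mulVec_eq_smul (A : Matrix (Fin 2) (Fin 2) ℂ)
  refine fun hρ => hρ ⟨v, hv, fun g => ?_⟩
  refine PresentedGroup.generated_by rels ((SpecialLinearGroup.lineStabilizer v).comap ρ)
    (fun i => ?_) g
  exact ⟨c, by rw [h i, hc]⟩

theorem trefoil_braid :
    (PresentedGroup.of 0 * PresentedGroup.of 1 * PresentedGroup.of 0 : PresentedGroup trefoilRels) =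
      PresentedGroup.of 1 * PresentedGroup.of 0 * PresentedGroup.of 1 :=
  PresentedGroup.mk_eq_mk_of_mul_inv_mem rfl

/-- For every irreducible `SL₂(ℂ)` representation `ρ` of the trefoil knot group,
`tr ρ(x² y x² y) = -2`. -/
theorem trefoil_trace_x2yx2y (ρ : PresentedGroup trefoilRels →* SL2C)
    (hρ : IsIrreducibleRep ρ) :
    Matrix.trace ((ρ (PresentedGroup.of 0 ^ 2 * PresentedGroup.of 1 *
      PresentedGroup.of 0 ^ 2 * PresentedGroup.of 1) : Matrix (Fin 2) (Fin 2) ℂ)) = -2 := by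
  set a := ρ (PresentedGroup.of 0)
  set b := ρ (PresentedGroup.of 1)
  have hbraid : a * b * a = b * a * b := by simpa only [map_mul] using congrArg ρ trefoil_braid
  have hx : ρ (PresentedGroup.of 0 ^ 2 * PresentedGroup.of 1 * PresentedGroup.of 0 ^ 2 *
      PresentedGroup.of 1) = (a * b * a) ^ 2 := by
    rw [map_mul, map_mul, map_mul, map_pow, sq_mul_sq_mul_eq_braid_sq hbraid]
  rw [hx]
  by_cases htr : trace ((a * b * a : SL2C) : Matrix (Fin 2) (Fin 2) ℂ) = 0
  · exact SpecialLinearGroup.trace_sq_of_trace_eq_zero htr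
  have hza : Commute (a * b * a) a :=
    SpecialLinearGroup.commute_of_commute_sq_of_trace_ne_zero (commute_braid_sq hbraid) htr
  have hba : b = a := mul_right_cancel ((semiconjBy_braid_left hbraid).symm.trans hza.eq)
  exact absurd hρ
    (not_isIrreducibleRep_of_forall_map_of_eq ρ a (Fin.forall_fin_two.mpr ⟨rfl, hba⟩))
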